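/- Unbalanced type β dynamics on the projective plane (Lemma 2.8, diagonal case): Let a_n = diag(α_n, β_n, 1) ∈ GL(3,ℝ) with α_n ≥ β_n ≥ 1 for all n, β_n → ∞ and β_n/α_n → λ for some λ ∈ (0,1], acting on ℝP². Then: (1) for every p = [x:y:z] ∈ ℝP² with (x,y) ≠ (0,0), the dynamic set D_{(a_n)}(p) equals {[x : λy : 0]}; (2) D_{(a_n)}([e₃]) = ℝP². -/

import Mathlib

open Matrix Filter Topology Set

noncomputable section

/-- `V3` is `ℝ³`. -/
abbrev V3 : Type := Fin 3 → ℝ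

/-- The group `GL(3,ℝ)` of invertible `3 × 3` real matrices. -/
abbrev GL3 : Type := (Matrix (Fin 3) (Fin 3) ℝ)ˣ

/-- Nonzero vectors of `ℝ³` up to a nonzero scalar. -/
def projSetoid : Setoid {v : V3 // v ≠ 0} where
  r v w := ∃ c : ℝ, c ≠ 0 ∧ w.1 = c • v.1
  iseqv := by
    refine ⟨fun v => ⟨1, one_ne_zero, (one_smul ℝ v.1).symm⟩, ?_, ?_⟩
    · rintro v w ⟨c, hc, h⟩
      exact ⟨c⁻¹, inv_ne_zero hc, by rw [h, smul_smul, inv_mul_cancel₀ hc, one_smul]⟩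
    · rintro u v w ⟨c, hc, h⟩ ⟨d, hd, h'⟩
      exact ⟨d * c, mul_ne_zero hd hc, by rw [h', h, smul_smul]⟩

/-- The real projective plane `ℝP²`, as the quotient of `ℝ³ \ {0}` by nonzero scalings,
with the quotient topology.  (We use the same model for the dual projective plane `ℝP²*`,
a class `[f₁ : f₂ : f₃]*` of linear forms being recorded through its coefficient
vector `(f₁, f₂, f₃)`; the form acts on vectors by the dot product.) -/
def RP2 : Type := Quotient projSetoid

/-- The projective class `[v]` of a nonzero vector. -/
def RP2.mk (v : V3) (hv : v ≠ 0) : RP2 := Quotient.mk projSetoid ⟨v, hv⟩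

instance : TopologicalSpace RP2 :=
  inferInstanceAs (TopologicalSpace (Quotient projSetoid))

lemma RP2.ind {P : RP2 → Prop} (h : ∀ (v : V3) (hv : v ≠ 0), P (RP2.mk v hv)) (p : RP2) : P p := by
  refine Quotient.ind (fun a => ?_) p
  exact h a.1 a.2

lemma RP2.mk_eq_mk_iff {v w : V3} {hv : v ≠ 0} {hw : w ≠ 0} :
    RP2.mk v hv = RP2.mk w hw ↔ ∃ c : ℝ, c ≠ 0 ∧ w = c • v :=
  ⟨fun h => Quotient.exact h, fun h => Quotient.sound h⟩

lemma ne_zero_of_coord {v : V3} (i : Fin 3) (h : v i ≠ 0) : v ≠ 0 :=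
  fun h0 => h (by rw [h0]; rfl)

/-- The projective class of a vector, defaulting to `[e₁]` for the zero vector. -/
def RP2.mk' (v : V3) : RP2 :=
  if h : v = 0 then RP2.mk ![1, 0, 0] (ne_zero_of_coord 0 (by simp)) else RP2.mk v h

lemma e1_ne : (![1, 0, 0] : V3) ≠ 0 := ne_zero_of_coord 0 (by norm_num)

lemma e3_ne : (![0, 0, 1] : V3) ≠ 0 := ne_zero_of_coord 2 (by simp)

lemma GL3.mulVec_ne {g : GL3} {v : V3} (hv : v ≠ 0) :
    (g : Matrix (Fin 3) (Fin 3) ℝ) *ᵥ v ≠ 0 := by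
  intro h
  apply hv
  have h2 : ((g⁻¹ : GL3) : Matrix (Fin 3) (Fin 3) ℝ) *ᵥ
      ((g : Matrix (Fin 3) (Fin 3) ℝ) *ᵥ v) = 0 := by rw [h, Matrix.mulVec_zero]
  rwa [Matrix.mulVec_mulVec, Units.inv_mul, Matrix.one_mulVec] at h2

/-- The action of `g ∈ GL(3,ℝ)` on `ℝP²`, `g · [v] = [g v]`. -/
def RP2.mapMat (g : GL3) : RP2 → RP2 :=
  Quotient.lift
    (fun a : {v : V3 // v ≠ 0} =>
      RP2.mk ((g : Matrix (Fin 3) (Fin 3) ℝ) *ᵥ a.1) (GL3.mulVec_ne a.2))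
    (by
      rintro a b ⟨c, hc, h⟩
      apply Quotient.sound
      refine ⟨c, hc, ?_⟩
      show (g : Matrix (Fin 3) (Fin 3) ℝ) *ᵥ b.1 = c • ((g : Matrix (Fin 3) (Fin 3) ℝ) *ᵥ a.1)
      rw [h, Matrix.mulVec_smul])

lemma RP2.mapMat_mk (g : GL3) (v : V3) (hv : v ≠ 0) :
    RP2.mapMat g (RP2.mk v hv) =
      RP2.mk ((g : Matrix (Fin 3) (Fin 3) ℝ) *ᵥ v) (GL3.mulVec_ne hv) := rfl

/-- The element of `GL(3,ℝ)` acting on coefficient vectors of linear forms the way `g`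
acts on `ℝP²*`:  the coefficient vector of `f ∘ g⁻¹` is `(g⁻¹)ᵀ` applied to that of `f`. -/
def dualGL (g : GL3) : GL3 where
  val := ((g⁻¹ : GL3) : Matrix (Fin 3) (Fin 3) ℝ)ᵀ
  inv := ((g : GL3) : Matrix (Fin 3) (Fin 3) ℝ)ᵀ
  val_inv := by rw [← Matrix.transpose_mul, Units.mul_inv, Matrix.transpose_one]
  inv_val := by rw [← Matrix.transpose_mul, Units.inv_mul, Matrix.transpose_one]

/-- The flag space `X`: pairs `([v], [f]) ∈ ℝP² × ℝP²*` with `f(v) = 0`. -/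
def FlagSpace : Set (RP2 × RP2) :=
  {x | ∀ (v f : V3) (hv : v ≠ 0) (hf : f ≠ 0),
    x.1 = RP2.mk v hv → x.2 = RP2.mk f hf → f ⬝ᵥ v = 0}

/-- Points of the flag space. -/
abbrev Flag3 : Type := ↥FlagSpace

lemma mem_flagSpace_mk {v f : V3} (hv : v ≠ 0) (hf : f ≠ 0) (h : f ⬝ᵥ v = 0) :
    (RP2.mk v hv, RP2.mk f hf) ∈ FlagSpace := by
  rintro v' f' hv' hf' hp hq
  obtain ⟨c, hc, hcv⟩ := RP2.mk_eq_mk_iff.1 hp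
  obtain ⟨d, hd, hdf⟩ := RP2.mk_eq_mk_iff.1 hq
  rw [hcv, hdf, smul_dotProduct, dotProduct_smul, h]
  simp

lemma dot_invariance (g : GL3) (v f : V3) :
    (((dualGL g : GL3) : Matrix (Fin 3) (Fin 3) ℝ) *ᵥ f) ⬝ᵥ
      ((g : Matrix (Fin 3) (Fin 3) ℝ) *ᵥ v) = f ⬝ᵥ v := by
  have h1 : ((dualGL g : GL3) : Matrix (Fin 3) (Fin 3) ℝ) *ᵥ f =
      f ᵥ* ((g⁻¹ : GL3) : Matrix (Fin 3) (Fin 3) ℝ) := Matrix.mulVec_transpose _ _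
  rw [h1, Matrix.dotProduct_mulVec, Matrix.vecMul_vecMul, Units.inv_mul, Matrix.vecMul_one]

lemma flagPair_mem (g : GL3) {x : RP2 × RP2} (hx : x ∈ FlagSpace) :
    (RP2.mapMat g x.1, RP2.mapMat (dualGL g) x.2) ∈ FlagSpace := by
  obtain ⟨p, q⟩ := x
  revert hx
  refine Quotient.inductionOn₂ p q ?_
  rintro ⟨v, hv⟩ ⟨f, hf⟩ hx
  have h0 : f ⬝ᵥ v = 0 := hx v f hv hf rfl rfl
  exact mem_flagSpace_mk _ _ (by rw [dot_invariance]; exact h0)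

/-- The action of `g ∈ GL(3,ℝ)` on the flag space,
`g · ([v], [f]) = ([g v], [f ∘ g⁻¹])`. -/
def flagMap (g : GL3) (x : Flag3) : Flag3 :=
  ⟨(RP2.mapMat g x.1.1, RP2.mapMat (dualGL g) x.1.2), flagPair_mem g x.2⟩

/-! ### Composition laws and continuity -/

lemma RP2.mapMat_mapMat (g h : GL3) (p : RP2) :
    RP2.mapMat g (RP2.mapMat h p) = RP2.mapMat (g * h) p := by
  refine Quotient.inductionOn p fun a => ?_
  apply Quotient.sound
  exact ⟨1, one_ne_zero, by simp [Matrix.mulVec_mulVec, Units.val_mul]⟩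

lemma RP2.mapMat_one (p : RP2) : RP2.mapMat 1 p = p := by
  refine Quotient.inductionOn p fun a => ?_
  apply Quotient.sound
  exact ⟨1, one_ne_zero, by simp [Matrix.one_mulVec, Units.val_one]⟩

lemma dualGL_mul (g h : GL3) : dualGL (g * h) = dualGL g * dualGL h := by
  apply Units.ext
  rw [Units.val_mul]
  show (((g * h)⁻¹ : GL3) : Matrix (Fin 3) (Fin 3) ℝ)ᵀ =
    ((g⁻¹ : GL3) : Matrix (Fin 3) (Fin 3) ℝ)ᵀ * ((h⁻¹ : GL3) : Matrix (Fin 3) (Fin 3) ℝ)ᵀ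
  rw [_root_.mul_inv_rev, Units.val_mul, Matrix.transpose_mul]

lemma dualGL_one : dualGL (1 : GL3) = 1 := by
  apply Units.ext
  show (((1 : GL3)⁻¹ : GL3) : Matrix (Fin 3) (Fin 3) ℝ)ᵀ = ((1 : GL3) : Matrix (Fin 3) (Fin 3) ℝ)
  rw [inv_one, Units.val_one, Matrix.transpose_one]

lemma flagMap_flagMap (g h : GL3) (x : Flag3) :
    flagMap g (flagMap h x) = flagMap (g * h) x := by
  apply Subtype.ext
  apply Prod.ext
  · exact RP2.mapMat_mapMat g h x.1.1
  · show RP2.mapMat (dualGL g) (RP2.mapMat (dualGL h) x.1.2) = RP2.mapMat (dualGL (g * h)) x.1.2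
    rw [RP2.mapMat_mapMat, dualGL_mul]

lemma flagMap_one (x : Flag3) : flagMap 1 x = x := by
  apply Subtype.ext
  apply Prod.ext
  · exact RP2.mapMat_one x.1.1
  · show RP2.mapMat (dualGL 1) x.1.2 = x.1.2
    rw [dualGL_one, RP2.mapMat_one]

lemma continuous_mulVec (M : Matrix (Fin 3) (Fin 3) ℝ) :
    Continuous fun v : V3 => M *ᵥ v := by
  have h : (fun v : V3 => M *ᵥ v) = fun v => fun i => ∑ j, M i j * v j := by
    funext v i
    simp [Matrix.mulVec, dotProduct]
  rw [h]
  exact continuous_pi fun i =>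
    continuous_finset_sum _ fun j _ => continuous_const.mul (continuous_apply j)

lemma continuous_mapMat (g : GL3) : Continuous (RP2.mapMat g) := by
  apply Continuous.quotient_lift
  exact continuous_quotient_mk'.comp
    (Continuous.subtype_mk ((continuous_mulVec _).comp continuous_subtype_val) _)

lemma continuous_flagMap (g : GL3) : Continuous (flagMap g) := by
  apply Continuous.subtype_mk
  exact ((continuous_mapMat g).comp (continuous_fst.comp continuous_subtype_val)).prodMk
    ((continuous_mapMat (dualGL g)).comp (continuous_snd.comp continuous_subtype_val))

/-- The action of `g ∈ GL(3,ℝ)` on the flag space, as a homeomorphism. -/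
def flagHomeo (g : GL3) : Flag3 ≃ₜ Flag3 where
  toFun := flagMap g
  invFun := flagMap g⁻¹
  left_inv := fun x => by rw [flagMap_flagMap, inv_mul_cancel, flagMap_one]
  right_inv := fun x => by rw [flagMap_flagMap, mul_inv_cancel, flagMap_one]
  continuous_toFun := continuous_flagMap g
  continuous_invFun := continuous_flagMap g⁻¹

/-- The group of homeomorphisms of a topological space
(with `(f * g) x = f (g x)`). -/
instance homeoGroup (Z : Type*) [TopologicalSpace Z] : Group (Z ≃ₜ Z) where
  mul f g := g.trans f
  one := Homeomorph.refl Z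
  inv := Homeomorph.symm
  mul_assoc _ _ _ := Homeomorph.ext fun _ => rfl
  one_mul _ := Homeomorph.ext fun _ => rfl
  mul_one _ := Homeomorph.ext fun _ => rfl
  inv_mul_cancel f := Homeomorph.ext fun x => f.symm_apply_apply x

/-! ### Geometric objects in the flag space -/

/-- The α-circle of a point `p ∈ ℝP²`: all flags whose point is `p`. -/
def Cα (p : RP2) : Set Flag3 := {x | x.1.1 = p}

/-- The β-circle of the projective line with defining form (class) `q`:
all flags whose plane is `ker q`. -/
def Cβ (q : RP2) : Set Flag3 := {x | x.1.2 = q}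

/-- The plane of the flag `x` contains the direction of the vector `u`. -/
def planeContains (x : Flag3) (u : V3) : Prop :=
  ∀ (f : V3) (hf : f ≠ 0), x.1.2 = RP2.mk f hf → f ⬝ᵥ u = 0

/-- The point of the flag `x` lies on the projective line defined by the linear
form of coefficients `w`. -/
def pointOnForm (x : Flag3) (w : V3) : Prop :=
  ∀ (v : V3) (hv : v ≠ 0), x.1.1 = RP2.mk v hv → w ⬝ᵥ v = 0

/-- The β-circle of the projective line spanned by the (independent) directions of
`u` and `w`: all flags whose plane contains both. -/
def CβSpan (u w : V3) : Set Flag3 := {x | planeContains x u ∧ planeContains x w}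

lemma li_ne_zero_0 {v1 v2 v3 : V3} (h : LinearIndependent ℝ ![v1, v2, v3]) : v1 ≠ 0 := by
  have := h.ne_zero 0; simpa using this

lemma li_ne_zero_1 {v1 v2 v3 : V3} (h : LinearIndependent ℝ ![v1, v2, v3]) : v2 ≠ 0 := by
  have := h.ne_zero 1; simpa using this

lemma li_ne_zero_2 {v1 v2 v3 : V3} (h : LinearIndependent ℝ ![v1, v2, v3]) : v3 ≠ 0 := by
  have := h.ne_zero 2; simpa using this

/-- The repulsive bouquet of circles `B⁻(g) = C_α([v₃]) ∪ C_β(span(v₂,v₃))` of a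
loxodromic element with eigenvectors `v₁, v₂, v₃` (eigenvalues in decreasing order
of modulus). -/
def bouquetMinus (v2 v3 : V3) (h3 : v3 ≠ 0) : Set Flag3 :=
  Cα (RP2.mk v3 h3) ∪ CβSpan v2 v3

/-- The attractive bouquet of circles `B⁺(g) = C_α([v₁]) ∪ C_β(span(v₁,v₂))`. -/
def bouquetPlus (v1 v2 : V3) (h1 : v1 ≠ 0) : Set Flag3 :=
  Cα (RP2.mk v1 h1) ∪ CβSpan v1 v2

/-- The dynamic set of a point `x` under a sequence of maps `g n`: all limits of
`g (n k) (x k)` for a strictly increasing sequence `(n k)` and a sequence `x k → x`. -/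
def DynSet {M : Type*} [TopologicalSpace M] (g : ℕ → M → M) (x : M) : Set M :=
  {y | ∃ φ : ℕ → ℕ, StrictMono φ ∧ ∃ u : ℕ → M,
    Tendsto u atTop (𝓝 x) ∧ Tendsto (fun k => g (φ k) (u k)) atTop (𝓝 y)}

end

/-! In coordinates `aₙ [x : y : z] = [x : (βₙ/αₙ) y : z/αₙ]`, which tends to `[x : λy : 0]`
even when `[x : y : z]` moves along a convergent sequence of representatives. Since `ℝP²` is
Hausdorff (a line is determined by its orthogonal projection matrix) and a convergent sequence
in `ℝP²` has, along a subsequence, convergent representatives (compactness of the unit sphere),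
this pins down the dynamic set in (1). For (2), given `[z]` with `z₂ ≥ 0`, put
`tₙ = z₂ + βₙ^(-1/2)`: then `aₙ [z₀/αₙ : z₁/βₙ : tₙ] = [z₀ : z₁ : tₙ] → [z]`, while
`βₙ tₙ ≥ √βₙ → ∞` forces `[z₀/αₙ : z₁/βₙ : tₙ] → [e₃]`. -/

namespace RP2

lemma mk_congr {v w : V3} (h : v = w) (hv : v ≠ 0) (hw : w ≠ 0) :
    RP2.mk v hv = RP2.mk w hw := by
  subst h; rfl

lemma mk_smul {v : V3} (hv : v ≠ 0) {c : ℝ} (hc : c ≠ 0) (hcv : c • v ≠ 0) :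
    RP2.mk (c • v) hcv = RP2.mk v hv :=
  RP2.mk_eq_mk_iff.2 ⟨c⁻¹, inv_ne_zero hc, by rw [smul_smul, inv_mul_cancel₀ hc, one_smul]⟩

lemma mk'_of_ne_zero {v : V3} (hv : v ≠ 0) : RP2.mk' v = RP2.mk v hv := dif_neg hv

lemma tendsto_mk {b : ℕ → V3} (hb : ∀ k, b k ≠ 0) {v : V3} (hv : v ≠ 0)
    (h : Tendsto b atTop (𝓝 v)) :
    Tendsto (fun k => RP2.mk (b k) (hb k)) atTop (𝓝 (RP2.mk v hv)) :=
  (continuous_quotient_mk'.tendsto _).comp (tendsto_subtype_rng.2 h)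

noncomputable def orthoProj : RP2 → Matrix (Fin 3) (Fin 3) ℝ :=
  Quotient.lift (fun a => (a.1 ⬝ᵥ a.1)⁻¹ • vecMulVec a.1 a.1) <| by
    rintro ⟨v, hv⟩ ⟨w, hw⟩ ⟨c, hc, rfl : w = c • v⟩
    have hvv : v ⬝ᵥ v ≠ 0 := dotProduct_self_eq_zero.not.2 hv
    simp only [smul_dotProduct, dotProduct_smul, smul_vecMulVec, vecMulVec_smul, smul_smul,
      smul_eq_mul]
    congr 1
    field_simp

lemma orthoProj_mk_mulVec (v : V3) (hv : v ≠ 0) (w : V3) :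
    orthoProj (RP2.mk v hv) *ᵥ w = ((v ⬝ᵥ v)⁻¹ * (v ⬝ᵥ w)) • v := by
  simp only [orthoProj, RP2.mk, Quotient.lift_mk, smul_mulVec, vecMulVec_mulVec, op_smul_eq_smul,
    smul_smul]

lemma orthoProj_injective : Function.Injective orthoProj := by
  intro p q
  induction p using RP2.ind with | h v hv => ?_
  induction q using RP2.ind with | h w hw => ?_
  intro h
  have hww : w ⬝ᵥ w ≠ 0 := dotProduct_self_eq_zero.not.2 hw
  have key : w = ((v ⬝ᵥ v)⁻¹ * (v ⬝ᵥ w)) • v := by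
    have := congrArg (· *ᵥ w) h
    rwa [orthoProj_mk_mulVec, orthoProj_mk_mulVec, inv_mul_cancel₀ hww, one_smul,
      eq_comm] at this
  refine RP2.mk_eq_mk_iff.2 ⟨_, fun hc => hw ?_, key⟩
  rw [key, hc, zero_smul]

lemma continuous_orthoProj : Continuous orthoProj := by
  refine Continuous.quotient_lift ?_ _
  have hval : Continuous fun a : {v : V3 // v ≠ 0} => a.1 := continuous_subtype_val
  exact ((hval.dotProduct hval).inv₀ fun a => dotProduct_self_eq_zero.not.2 a.2).smul
    (hval.matrix_vecMulVec hval)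

instance : T2Space RP2 := .of_injective_continuous orthoProj_injective continuous_orthoProj

lemma exists_mk_eq_and_nonneg (p : RP2) :
    ∃ (z : V3) (hz : z ≠ 0), 0 ≤ z 2 ∧ RP2.mk z hz = p := by
  induction p using RP2.ind with | h v hv => ?_
  rcases le_total 0 (v 2) with h | h
  · exact ⟨v, hv, h, rfl⟩
  · refine ⟨(-1 : ℝ) • v, smul_ne_zero (by norm_num) hv, ?_, mk_smul hv (by norm_num) _⟩
    simpa using h

lemma exists_subseq_tendsto_lift {u : ℕ → RP2} {v : V3} {hv : v ≠ 0}
    (hu : Tendsto u atTop (𝓝 (RP2.mk v hv))) :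
    ∃ ψ : ℕ → ℕ, StrictMono ψ ∧ ∃ (b : ℕ → V3) (hb : ∀ k, b k ≠ 0),
      (∀ k, RP2.mk (b k) (hb k) = u (ψ k)) ∧ Tendsto b atTop (𝓝 v) := by
  have hsphere (p : RP2) :
      ∃ w ∈ Metric.sphere (0 : V3) 1, ∃ hw : w ≠ 0, RP2.mk w hw = p := by
    induction p using RP2.ind with | h w hw => ?_
    have hw' : ‖w‖⁻¹ • w ≠ 0 := smul_ne_zero (inv_ne_zero (norm_ne_zero_iff.2 hw)) hw
    exact ⟨_, mem_sphere_zero_iff_norm.2 (norm_smul_inv_norm hw), hw',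
      mk_smul hw (inv_ne_zero (norm_ne_zero_iff.2 hw)) hw'⟩
  choose w hw_mem hw_ne hw_mk using hsphere
  obtain ⟨w₀, hw₀, ψ, hψ, hlim⟩ :=
    (isCompact_sphere (0 : V3) 1).tendsto_subseq fun k => hw_mem (u k)
  have hw₀ne : w₀ ≠ 0 := ne_zero_of_mem_sphere one_ne_zero ⟨w₀, hw₀⟩
  have hvw : RP2.mk v hv = RP2.mk w₀ hw₀ne :=
    tendsto_nhds_unique (hu.comp hψ.tendsto_atTop)
      ((tendsto_mk _ hw₀ne hlim).congr fun k => hw_mk _)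
  obtain ⟨c, hc, rfl⟩ := RP2.mk_eq_mk_iff.1 hvw
  refine ⟨ψ, hψ, fun k => c⁻¹ • w (u (ψ k)),
    fun k => smul_ne_zero (inv_ne_zero hc) (hw_ne _),
    fun k => (mk_smul (hw_ne _) (inv_ne_zero hc) _).trans (hw_mk _), ?_⟩
  simpa [smul_smul, inv_mul_cancel₀ hc] using hlim.const_smul c⁻¹

end RP2

lemma diagonal_mulVec_fin_three (a b c : ℝ) (v : V3) :
    diagonal ![a, b, c] *ᵥ v = ![a * v 0, b * v 1, c * v 2] := by
  ext i
  fin_cases i <;> simp [mulVec_diagonal]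

lemma tendsto_mul_add_inv_sqrt_atTop {β : ℕ → ℝ} (hβpos : ∀ n, 0 < β n)
    (hβ : Tendsto β atTop atTop) {c : ℝ} (hc : 0 ≤ c) :
    Tendsto (fun n => β n * (c + (√(β n))⁻¹)) atTop atTop := by
  refine tendsto_atTop_mono (fun n => ?_) (Real.tendsto_sqrt_atTop.comp hβ)
  calc √(β n) = β n * (√(β n))⁻¹ :=
        (eq_mul_inv_iff_mul_eq₀ (Real.sqrt_pos.2 (hβpos n)).ne').2
          (Real.mul_self_sqrt (hβpos n).le)
    _ ≤ β n * (c + (√(β n))⁻¹) :=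
        mul_le_mul_of_nonneg_left (le_add_of_nonneg_left hc) (hβpos n).le

section DiagonalDynamics

variable {α β : ℕ → ℝ} {A : ℕ → GL3}

lemma tendsto_mapMat_diagonal_mk
    (hA : ∀ n, (A n : Matrix (Fin 3) (Fin 3) ℝ) = diagonal ![α n, β n, 1])
    (hα0 : ∀ n, α n ≠ 0) (hα : Tendsto α atTop atTop) {l : ℝ}
    (hratio : Tendsto (fun n => β n / α n) atTop (𝓝 l))
    {b : ℕ → V3} (hb : ∀ n, b n ≠ 0) {w : V3} (hbw : Tendsto b atTop (𝓝 w))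
    (hwl : (![w 0, l * w 1, 0] : V3) ≠ 0) :
    Tendsto (fun n => RP2.mapMat (A n) (RP2.mk (b n) (hb n))) atTop
      (𝓝 (RP2.mk ![w 0, l * w 1, 0] hwl)) := by
  set d : ℕ → V3 := fun n => ![b n 0, β n / α n * b n 1, (α n)⁻¹ * b n 2]
  have hAd (n : ℕ) : (A n : Matrix (Fin 3) (Fin 3) ℝ) *ᵥ b n = α n • d n := by
    rw [hA, diagonal_mulVec_fin_three]
    have := hα0 n
    ext i
    fin_cases i <;> simp [d] <;> field_simp
  have hd (n : ℕ) : d n ≠ 0 := fun h => GL3.mulVec_ne (hb n) (by rw [hAd, h, smul_zero])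
  have hmk (n : ℕ) : RP2.mapMat (A n) (RP2.mk (b n) (hb n)) = RP2.mk (d n) (hd n) := by
    rw [RP2.mapMat_mk]
    exact (RP2.mk_congr (hAd n) _ (smul_ne_zero (hα0 n) (hd n))).trans
      (RP2.mk_smul (hd n) (hα0 n) _)
  have hcoord (i : Fin 3) : Tendsto (fun n => b n i) atTop (𝓝 (w i)) := tendsto_pi_nhds.1 hbw i
  have hdlim : Tendsto d atTop (𝓝 ![w 0, l * w 1, 0]) := by
    refine tendsto_pi_nhds.2 fun i => ?_
    fin_cases i
    · exact hcoord 0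
    · exact hratio.mul (hcoord 1)
    · simpa [d] using (tendsto_inv_atTop_zero.comp hα).mul (hcoord 2)
  exact (RP2.tendsto_mk hd hwl hdlim).congr fun n => (hmk n).symm

lemma dynSet_mapMat_diagonal_mk
    (hA : ∀ n, (A n : Matrix (Fin 3) (Fin 3) ℝ) = diagonal ![α n, β n, 1])
    (hα0 : ∀ n, α n ≠ 0) (hα : Tendsto α atTop atTop) {l : ℝ}
    (hratio : Tendsto (fun n => β n / α n) atTop (𝓝 l))
    {v : V3} (hv : v ≠ 0) (hwl : (![v 0, l * v 1, 0] : V3) ≠ 0) :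
    DynSet (fun n => RP2.mapMat (A n)) (RP2.mk v hv) = {RP2.mk ![v 0, l * v 1, 0] hwl} := by
  refine eq_singleton_iff_unique_mem.2 ⟨⟨id, strictMono_id, fun _ => RP2.mk v hv,
    tendsto_const_nhds, tendsto_mapMat_diagonal_mk hA hα0 hα hratio _ tendsto_const_nhds hwl⟩, ?_⟩
  rintro y ⟨φ, hφ, u, hu, hy⟩
  obtain ⟨ψ, hψ, b, hb, hbu, hbv⟩ := RP2.exists_subseq_tendsto_lift hu
  have hφψ : Tendsto (φ ∘ ψ) atTop atTop := (hφ.comp hψ).tendsto_atTop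
  have hlim := tendsto_mapMat_diagonal_mk (A := A ∘ φ ∘ ψ) (fun k => hA _) (fun k => hα0 _)
    (hα.comp hφψ) (hratio.comp hφψ) hb hbv hwl
  refine tendsto_nhds_unique (hy.comp hψ.tendsto_atTop) (hlim.congr fun k => ?_)
  simp [hbu]

lemma mk_mem_dynSet_mapMat_diagonal_e3
    (hA : ∀ n, (A n : Matrix (Fin 3) (Fin 3) ℝ) = diagonal ![α n, β n, 1])
    (hβpos : ∀ n, 0 < β n) (hβα : ∀ n, β n ≤ α n) (hβ : Tendsto β atTop atTop)
    {z : V3} (hz : z ≠ 0) (hz2 : 0 ≤ z 2) :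
    RP2.mk z hz ∈ DynSet (fun n => RP2.mapMat (A n)) (RP2.mk ![0, 0, 1] e3_ne) := by
  set t : ℕ → ℝ := fun n => z 2 + (√(β n))⁻¹
  have htpos (n : ℕ) : 0 < t n :=
    add_pos_of_nonneg_of_pos hz2 (inv_pos.2 (Real.sqrt_pos.2 (hβpos n)))
  have hβt : Tendsto (fun n => β n * t n) atTop atTop :=
    tendsto_mul_add_inv_sqrt_atTop hβpos hβ hz2
  have hαt : Tendsto (fun n => α n * t n) atTop atTop :=
    tendsto_atTop_mono (fun n => mul_le_mul_of_nonneg_right (hβα n) (htpos n).le) hβt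
  set x : ℕ → V3 := fun n => ![z 0 / α n, z 1 / β n, t n]
  have hx (n : ℕ) : x n ≠ 0 := ne_zero_of_coord 2 (htpos n).ne'
  refine ⟨id, strictMono_id, fun n => RP2.mk (x n) (hx n), ?_, ?_⟩
  · have hlim : Tendsto (fun n => (t n)⁻¹ • x n) atTop (𝓝 ![0, 0, 1]) := by
      refine tendsto_pi_nhds.2 fun i => ?_
      fin_cases i
      · simpa [x, div_eq_mul_inv, mul_assoc, mul_comm, mul_left_comm] using
          (tendsto_inv_atTop_zero.comp hαt).const_mul (z 0)
      · simpa [x, div_eq_mul_inv, mul_assoc, mul_comm, mul_left_comm] using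
          (tendsto_inv_atTop_zero.comp hβt).const_mul (z 1)
      · simp [x, (htpos _).ne']
    exact (RP2.tendsto_mk (fun n => smul_ne_zero (inv_ne_zero (htpos n).ne') (hx n)) e3_ne
      hlim).congr fun n => RP2.mk_smul (hx n) (inv_ne_zero (htpos n).ne') _
  · have hy (n : ℕ) : (![z 0, z 1, t n] : V3) ≠ 0 := ne_zero_of_coord 2 (htpos n).ne'
    have himg (n : ℕ) : RP2.mapMat (A n) (RP2.mk (x n) (hx n)) = RP2.mk _ (hy n) := by
      refine RP2.mk_congr ?_ _ _
      have := (hβpos n).ne'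
      have := ((hβpos n).trans_le (hβα n)).ne'
      rw [hA, diagonal_mulVec_fin_three]
      ext i
      fin_cases i <;> simp [x] <;> field_simp
    have hlim : Tendsto (fun n => (![z 0, z 1, t n] : V3)) atTop (𝓝 z) := by
      have ht_lim : Tendsto t atTop (𝓝 (z 2)) := by
        simpa using tendsto_const_nhds.add (tendsto_inv_atTop_zero.comp
          (Real.tendsto_sqrt_atTop.comp hβ))
      refine tendsto_pi_nhds.2 fun i => ?_
      fin_cases i
      · exact tendsto_const_nhds
      · exact tendsto_const_nhds
      · exact ht_lim
    exact (RP2.tendsto_mk hy hz hlim).congr fun n => (himg n).symm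

end DiagonalDynamics

theorem unbalanced_beta_rp2_dynamics_general
    (α β : ℕ → ℝ) (hord : ∀ n, 1 ≤ β n ∧ β n ≤ α n)
    (hβ : Filter.Tendsto β Filter.atTop Filter.atTop) (l : ℝ) (hl0 : 0 < l)
    (hratio : Filter.Tendsto (fun n => β n / α n) Filter.atTop (nhds l))
    (A : ℕ → GL3)
    (hA : ∀ n, (A n : Matrix (Fin 3) (Fin 3) ℝ) = Matrix.diagonal ![α n, β n, 1]) :
    (∀ (v : V3) (hv : v ≠ 0), ¬(v 0 = 0 ∧ v 1 = 0) →
      DynSet (fun n => RP2.mapMat (A n)) (RP2.mk v hv) = {RP2.mk' ![v 0, l * v 1, 0]}) ∧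
    DynSet (fun n => RP2.mapMat (A n)) (RP2.mk ![0, 0, 1] e3_ne) = Set.univ := by
  have hβpos (n : ℕ) : 0 < β n := one_pos.trans_le (hord n).1
  have hα0 (n : ℕ) : α n ≠ 0 := ((hβpos n).trans_le (hord n).2).ne'
  have hα : Tendsto α atTop atTop := tendsto_atTop_mono (fun n => (hord n).2) hβ
  refine ⟨fun v hv hv01 => ?_, eq_univ_of_forall fun p => ?_⟩
  · have hwl : (![v 0, l * v 1, 0] : V3) ≠ 0 := fun h =>
      hv01 ⟨by simpa using congrFun h 0, by simpa [hl0.ne'] using congrFun h 1⟩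
    rw [RP2.mk'_of_ne_zero hwl]
    exact dynSet_mapMat_diagonal_mk hA hα0 hα hratio hv hwl
  · obtain ⟨z, hz, hz2, rfl⟩ := RP2.exists_mk_eq_and_nonneg p
    exact mk_mem_dynSet_mapMat_diagonal_e3 hA hβpos (fun n => (hord n).2) hβ hz hz2

/-- Lemma 2.8 (unbalanced type β dynamics on the projective plane, diagonal case). -/
theorem unbalanced_beta_rp2_dynamics
    (α β : ℕ → ℝ) (hord : ∀ n, 1 ≤ β n ∧ β n ≤ α n)
    (hβ : Filter.Tendsto β Filter.atTop Filter.atTop) (l : ℝ) (hl0 : 0 < l) (hl1 : l ≤ 1)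
    (hratio : Filter.Tendsto (fun n => β n / α n) Filter.atTop (nhds l))
    (A : ℕ → GL3)
    (hA : ∀ n, (A n : Matrix (Fin 3) (Fin 3) ℝ) = Matrix.diagonal ![α n, β n, 1]) :
    (∀ (v : V3) (hv : v ≠ 0), ¬(v 0 = 0 ∧ v 1 = 0) →
      DynSet (fun n => RP2.mapMat (A n)) (RP2.mk v hv) = {RP2.mk' ![v 0, l * v 1, 0]}) ∧
    DynSet (fun n => RP2.mapMat (A n)) (RP2.mk ![0, 0, 1] e3_ne) = Set.univ :=
  unbalanced_beta_rp2_dynamics_general α β hord hβ l hl0 hratio A hA
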